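/- Let G be a finitely generated group, H₁,…,Hₙ finitely generated subgroups, Xᵢ a nontrivial Hᵢ-almost invariant subset of G for each i, with the family in good position. Then the set P of cross-connected components of Ē, with the betweenness relation ABC, is a pretree: (T0) ABC implies A ≠ C; (T1) ABC implies CBA; (T2) ABC implies not ACB; (T3) if ABC and D ≠ B then ABD or DBC. Moreover left translation induces an action of G on P which preserves betweenness. -/

import Mathlib

section Defs

variable {G : Type*} [Group G]

/-- `W` is `H`-finite: contained in finitely many left cosets `Hg` of `H` in `G`. -/
def HFinite (H : Subgroup G) (W : Set G) : Prop :=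
  ∃ F : Finset G, W ⊆ ⋃ g ∈ F, (· * g) '' (H : Set G)

/-- The left translate `gX` of a subset `X` of `G`. -/
def leftTr (g : G) (X : Set G) : Set G := (g * ·) '' X

/-- `X` is an `H`-almost invariant subset of `G`: `HX = X` and for every `g` the
symmetric difference of `X` and `Xg` is `H`-finite. -/
def AlmostInv (H : Subgroup G) (X : Set G) : Prop :=
  (∀ h ∈ H, leftTr h X = X) ∧ ∀ g : G, HFinite H (symmDiff X ((· * g) '' X))

/-- `X` is a nontrivial `H`-almost invariant subset of `G`. -/
def NontrivialAI (H : Subgroup G) (X : Set G) : Prop :=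
  AlmostInv H X ∧ ¬ HFinite H X ∧ ¬ HFinite H Xᶜ

/-- `Y` crosses the `H`-almost invariant set `X`: none of the four corner sets is `H`-finite. -/
def Crosses (H : Subgroup G) (X Y : Set G) : Prop :=
  ¬ HFinite H (X ∩ Y) ∧ ¬ HFinite H (X ∩ Yᶜ) ∧ ¬ HFinite H (Xᶜ ∩ Y) ∧ ¬ HFinite H (Xᶜ ∩ Yᶜ)

/-- The coboundary `∂Y` of `Y` with respect to a finite generating set `S`. -/
def bdry (S : Finset G) (Y : Set G) : Set G :=
  {g : G | ∃ s ∈ (S : Set G) ∪ (S : Set G)⁻¹, (g ∈ Y) ≠ (g * s ∈ Y)}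

/-- `Y` crosses the `H`-almost invariant set `X` strongly: neither `∂Y ∩ X` nor
`∂Y ∩ X*` is `H`-finite. -/
def CrossesStrongly (S : Finset G) (H : Subgroup G) (X Y : Set G) : Prop :=
  ¬ HFinite H (bdry S Y ∩ X) ∧ ¬ HFinite H (bdry S Y ∩ Xᶜ)

/-- Two subsets of `G` are nested if one of the four corner sets is empty. -/
def Nested (U V : Set G) : Prop :=
  U ∩ V = ∅ ∨ U ∩ Vᶜ = ∅ ∨ Uᶜ ∩ V = ∅ ∨ Uᶜ ∩ Vᶜ = ∅

/-- The conjugate subgroup `gHg⁻¹`. -/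
def conjSub (g : G) (H : Subgroup G) : Subgroup G :=
  Subgroup.map (MulAut.conj g).toMonoidHom H

/-- A subgroup is two-ended if it contains an infinite cyclic subgroup of finite index. -/
def TwoEnded (H : Subgroup G) : Prop :=
  ∃ z : G, z ∈ H ∧ ¬ IsOfFinOrder z ∧ (Subgroup.zpowers z).relIndex H ≠ 0

/-- `G` is one-ended: `G` is infinite and every almost invariant subset of `G` (over the
trivial group) is finite or cofinite. -/
def OneEnded (G : Type*) [Group G] : Prop :=
  Infinite G ∧ ∀ X : Set G,
    (∀ g : G, (symmDiff X ((· * g) '' X)).Finite) → X.Finite ∨ Xᶜ.Finite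

/-- `G` is finitely presented. -/
def FinitelyPresentedGroup (G : Type*) [Group G] : Prop :=
  ∃ (n : ℕ) (R : Finset (FreeGroup (Fin n))),
    Nonempty (G ≃* FreeGroup (Fin n) ⧸ Subgroup.normalClosure (R : Set (FreeGroup (Fin n))))

/-- `Q(H)`: the collection of subsets of `G` which are almost invariant over some subgroup
commensurable with `H`. -/
def QH (H : Subgroup G) : Set (Set G) :=
  {X : Set G | ∃ K : Subgroup G, Subgroup.Commensurable K H ∧ AlmostInv K X}

/-- The Boolean algebra of subsets of `G` generated by a family `S` of subsets: the smallest
family containing `S` closed under complementation, finite intersections and finite unions. -/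
inductive BoolGen (S : Set (Set G)) : Set G → Prop
  | basic {U : Set G} : U ∈ S → BoolGen S U
  | compl {U : Set G} : BoolGen S U → BoolGen S Uᶜ
  | inter {U V : Set G} : BoolGen S U → BoolGen S V → BoolGen S (U ∩ V)
  | union {U V : Set G} : BoolGen S U → BoolGen S V → BoolGen S (U ∪ V)

/-- A subgroup is virtually free abelian of rank `m` if it has a finite index subgroup
isomorphic to `ℤ^m`. -/
def VirtuallyFreeAbelian (H : Subgroup G) (m : ℕ) : Prop :=
  ∃ K : Subgroup G, K ≤ H ∧ K.relIndex H ≠ 0 ∧ Nonempty (K ≃* Multiplicative (Fin m → ℤ))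

/-- `X` is `n`-canonical with respect to abelian groups: no translate of `X` crosses a
nontrivial almost invariant set over a virtually free abelian subgroup of rank at most `n`. -/
def NCanonicalAb (n : ℕ) (X : Set G) : Prop :=
  ∀ (L : Subgroup G) (m : ℕ), m ≤ n → VirtuallyFreeAbelian L m →
    ∀ Z : Set G, AlmostInv L Z → ¬ HFinite L Z → ¬ HFinite L Zᶜ →
      ∀ g : G, ¬ Crosses L Z (leftTr g X)

variable {ι : Type*}

/-- The set `E` of all translates of the sets `X i` and of their complements. -/
def Translates (X : ι → Set G) : Set (Set G) :=
  {U : Set G | ∃ (g : G) (i : ι), U = leftTr g (X i) ∨ U = (leftTr g (X i))ᶜ}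

/-- `W` is small for the element `U` of `E`: `W` is finite over the group `gHᵢg⁻¹`
associated to `U`. -/
def SmallOver (H : ι → Subgroup G) (X : ι → Set G) (U W : Set G) : Prop :=
  ∃ (g : G) (i : ι), (U = leftTr g (X i) ∨ U = (leftTr g (X i))ᶜ) ∧
    HFinite (conjSub g (H i)) W

/-- The four corner sets `U^{(*)} ∩ V^{(*)}`, indexed by pairs of booleans. -/
def corner (U V : Set G) (p : Bool × Bool) : Set G :=
  (cond p.1 U Uᶜ) ∩ (cond p.2 V Vᶜ)

/-- Condition (*): the family is in good position: whenever two of the four corner sets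
of a pair of elements of `E` are small, one of the corner sets is empty. -/
def GoodPosition (H : ι → Subgroup G) (X : ι → Set G) : Prop :=
  ∀ U ∈ Translates X, ∀ V ∈ Translates X,
    ∀ p q : Bool × Bool, p ≠ q →
      SmallOver H X U (corner U V p) → SmallOver H X U (corner U V q) →
        ∃ r : Bool × Bool, corner U V r = ∅

/-- The relation `U ≤ V` on `E`: `U ∩ V*` is empty or is the only small corner set. -/
def eLE (H : ι → Subgroup G) (X : ι → Set G) (U V : Set G) : Prop :=
  U ∩ Vᶜ = ∅ ∨
    (SmallOver H X U (U ∩ Vᶜ) ∧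
      ∀ p : Bool × Bool, p ≠ (true, false) → ¬ SmallOver H X U (corner U V p))

/-- The relation `U < V` on `E`. -/
def eLT (H : ι → Subgroup G) (X : ι → Set G) (U V : Set G) : Prop :=
  eLE H X U V ∧ U ≠ V

/-- `V` crosses the element `U` of `E`: no corner set is small. -/
def CrossesE (H : ι → Subgroup G) (X : ι → Set G) (U V : Set G) : Prop :=
  ∀ p : Bool × Bool, ¬ SmallOver H X U (corner U V p)

/-- `V` crosses the element `U` of `E` strongly. -/
def StronglyCrossesE (S : Finset G) (H : ι → Subgroup G) (X : ι → Set G) (U V : Set G) : Prop :=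
  ∃ (g : G) (i : ι), (U = leftTr g (X i) ∨ U = (leftTr g (X i))ᶜ) ∧
    ¬ HFinite (conjSub g (H i)) (bdry S V ∩ U) ∧ ¬ HFinite (conjSub g (H i)) (bdry S V ∩ Uᶜ)

/-- The relation on `E` generating the cross-connected components of `Ē`: two elements are
related if they coincide, are complementary, or cross. -/
def ccRelSet (H : ι → Subgroup G) (X : ι → Set G) (U V : Set G) : Prop :=
  U ∈ Translates X ∧ V ∈ Translates X ∧ (U = V ∨ U = Vᶜ ∨ CrossesE H X U V)

/-- `U` and `V` determine the same cross-connected component of `Ē`. -/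
def SameCCC (H : ι → Subgroup G) (X : ι → Set G) (U V : Set G) : Prop :=
  Relation.EqvGen (ccRelSet H X) U V

/-- `V̄` lies between `Ū` and `W̄` in `Ē`: some representatives satisfy `u < v < w`. -/
def BetweenBar (H : ι → Subgroup G) (X : ι → Set G) (U V W : Set G) : Prop :=
  ∃ u v w : Set G, (u = U ∨ u = Uᶜ) ∧ (v = V ∨ v = Vᶜ) ∧ (w = W ∨ w = Wᶜ) ∧
    eLT H X u v ∧ eLT H X v w

/-- The setoid on `E` whose classes are the cross-connected components of `Ē`. -/
def cccSetoid (H : ι → Subgroup G) (X : ι → Set G) :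
    Setoid {U : Set G // U ∈ Translates X} where
  r u v := SameCCC H X u.1 v.1
  iseqv := by
    refine ⟨fun u => Relation.EqvGen.refl _, ?_, ?_⟩
    · exact fun h => Relation.EqvGen.symm _ _ h
    · exact fun h₁ h₂ => Relation.EqvGen.trans _ _ _ h₁ h₂

theorem leftTr_leftTr (g g' : G) (X : Set G) : leftTr g (leftTr g' X) = leftTr (g * g') X := by
  simp only [leftTr, Set.image_image, mul_assoc]

theorem leftTr_compl (g : G) (X : Set G) : leftTr g Xᶜ = (leftTr g X)ᶜ :=
  Set.image_compl_eq (Group.mulLeft_bijective g)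

/-- Left translation as a map from `E` to `E`. -/
def translateE (X : ι → Set G) (g : G) (u : {U : Set G // U ∈ Translates X}) :
    {U : Set G // U ∈ Translates X} :=
  ⟨leftTr g u.1, by
    obtain ⟨g', i, h | h⟩ := u.2
    · exact ⟨g * g', i, Or.inl (by rw [h, leftTr_leftTr])⟩
    · exact ⟨g * g', i, Or.inr (by rw [h, leftTr_compl, leftTr_leftTr])⟩⟩

/-- Betweenness for cross-connected components: `B` lies between the distinct components
`A` and `C` if there are elements enclosed by them with `u < v < w`. -/
def BetweenCCC (H : ι → Subgroup G) (X : ι → Set G)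
    (A B C : Quotient (cccSetoid H X)) : Prop :=
  A ≠ B ∧ B ≠ C ∧ A ≠ C ∧
    ∃ u v w : {U : Set G // U ∈ Translates X},
      Quotient.mk (cccSetoid H X) u = A ∧ Quotient.mk (cccSetoid H X) v = B ∧
        Quotient.mk (cccSetoid H X) w = C ∧
        eLT H X u.1 v.1 ∧ eLT H X v.1 w.1

/-- The half-tree `Y_s` determined by the oriented edge `s = (u,v)`: the vertices
reachable from the terminal vertex `v` after deleting the edge `{u,v}`. -/
def halfTree {V : Type*} (T : SimpleGraph V) (u v : V) : Set V :=
  {w : V | (T.deleteEdges {s(u, v)}).Reachable v w}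

/-- With respect to a base vertex `b`, the subset `Z_s` of `G` determined by the
oriented edge `s = (u,v)`. -/
def Zset {V : Type*} [MulAction G V] (T : SimpleGraph V) (b u v : V) : Set G :=
  {g : G | g • b ∈ halfTree T u v}

/-- The vertex `v` encloses the `H`-almost invariant set `A`: for every edge `s`
oriented towards `v`, either `A ∩ Z_s*` or `A* ∩ Z_s*` is `H`-finite. -/
def Encloses {V : Type*} [MulAction G V] (T : SimpleGraph V) (b : V) (H : Subgroup G)
    (v : V) (A : Set G) : Prop :=
  ∀ u : V, T.Adj u v → HFinite H (A ∩ (Zset T b u v)ᶜ) ∨ HFinite H (Aᶜ ∩ (Zset T b u v)ᶜ)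

end Defs

/-!
Everything rests on one finiteness lemma, `hFinite_inter_of_subset_union`: a corner `U ∩ V` of
two elements of `E` which is finite over the group of `U` is also finite over the group of `V`,
so smallness of a corner does not depend on the side it is measured from. It follows that `≤`
is a partial order on `E` reversed by complementation (transitivity is where good position
enters), and that two elements which do not cross become comparable after reorienting them.
The pretree axioms then come from one observation: a cross-connected component not containing
`v̄` lies entirely on one side of `v`, since crossing elements cannot be separated by `v`.
Left translation preserves all the notions involved.
-/

open scoped Pointwise

theorem Set.inter_compl_eq_empty_iff {α : Type*} {s t : Set α} : s ∩ tᶜ = ∅ ↔ s ⊆ t := by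
  rw [← Set.sdiff_eq, Set.sdiff_eq_empty]

theorem compl_eq_or_compl_eq_compl {α : Type*} {s t : Set α} (h : t = s ∨ t = sᶜ) :
    tᶜ = s ∨ tᶜ = sᶜ := by
  rcases h with rfl | rfl
  exacts [Or.inr rfl, Or.inl (compl_compl s)]

section HFinite

variable {G : Type*} [Group G] {K : Subgroup G} {W W' : Set G}

theorem leftTr_eq_smul (g : G) (W : Set G) : leftTr g W = g • W := rfl

theorem leftTr_inv_leftTr (g : G) (W : Set G) : leftTr g⁻¹ (leftTr g W) = W :=
  inv_smul_smul g W

theorem hFinite_iff : HFinite K W ↔ ∃ F : Finset G, ∀ x ∈ W, ∃ k ∈ K, ∃ f ∈ F, k * f = x := by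
  simp only [HFinite, Set.subset_def, Set.mem_iUnion, Set.mem_image, SetLike.mem_coe, exists_prop]
  exact exists_congr fun F => forall₂_congr fun x _ =>
    ⟨fun ⟨f, hf, k, hk, h⟩ => ⟨k, hk, f, hf, h⟩, fun ⟨k, hk, f, hf, h⟩ => ⟨f, hf, k, hk, h⟩⟩

theorem HFinite.mono (h : HFinite K W) (hW : W' ⊆ W) : HFinite K W' :=
  let ⟨F, hF⟩ := h; ⟨F, hW.trans hF⟩

theorem hFinite_empty : HFinite K ∅ := ⟨∅, Set.empty_subset _⟩

theorem HFinite.union (h : HFinite K W) (h' : HFinite K W') : HFinite K (W ∪ W') := by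
  classical
  obtain ⟨F, hF⟩ := h
  obtain ⟨F', hF'⟩ := h'
  refine ⟨F ∪ F', Set.union_subset (hF.trans ?_) (hF'.trans ?_)⟩ <;>
    exact Set.biUnion_subset_biUnion_left (by simp [Set.subset_def]; tauto)

theorem HFinite.biUnion {α : Type*} (s : Finset α) {t : α → Set G}
    (h : ∀ a ∈ s, HFinite K (t a)) : HFinite K (⋃ a ∈ s, t a) := by
  classical
  induction s using Finset.induction with
  | empty => simpa using hFinite_empty
  | insert a s _ ih =>
    rw [Finset.set_biUnion_insert]
    exact (h a (s.mem_insert_self a)).union (ih fun b hb => h b (Finset.mem_insert_of_mem hb))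

theorem HFinite.image_mul_right (h : HFinite K W) (a : G) : HFinite K ((· * a) '' W) := by
  classical
  obtain ⟨F, hF⟩ := hFinite_iff.1 h
  refine hFinite_iff.2 ⟨F.image (· * a), ?_⟩
  rintro _ ⟨x, hx, rfl⟩
  obtain ⟨k, hk, f, hf, rfl⟩ := hF x hx
  exact ⟨k, hk, f * a, Finset.mem_image_of_mem _ hf, (mul_assoc k f a).symm⟩

theorem mem_conjSub {a x : G} : x ∈ conjSub a K ↔ ∃ k ∈ K, a * k * a⁻¹ = x := by
  simp [conjSub]

theorem conjSub_conjSub (a b : G) (K : Subgroup G) :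
    conjSub a (conjSub b K) = conjSub (a * b) K := by
  simp only [conjSub, Subgroup.map_map, map_mul]
  rfl

theorem conjSub_one (K : Subgroup G) : conjSub 1 K = K := by
  ext x
  simp [mem_conjSub]

theorem HFinite.conj (h : HFinite K W) (a : G) : HFinite (conjSub a K) (leftTr a W) := by
  classical
  obtain ⟨F, hF⟩ := hFinite_iff.1 h
  refine hFinite_iff.2 ⟨F.image (a * ·), ?_⟩
  rintro _ ⟨x, hx, rfl⟩
  obtain ⟨k, hk, f, hf, rfl⟩ := hF x hx
  exact ⟨a * k * a⁻¹, mem_conjSub.2 ⟨k, hk, rfl⟩, a * f, Finset.mem_image_of_mem _ hf, by group⟩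

theorem hFinite_leftTr_iff (a : G) : HFinite (conjSub a K) (leftTr a W) ↔ HFinite K W := by
  refine ⟨fun h => ?_, fun h => h.conj a⟩
  simpa only [conjSub_conjSub, inv_mul_cancel, conjSub_one, leftTr_inv_leftTr] using h.conj a⁻¹

end HFinite

section AlmostInv

variable {G : Type*} [Group G] {K L : Subgroup G} {A B P Q : Set G}

theorem AlmostInv.compl (h : AlmostInv K A) : AlmostInv K Aᶜ :=
  ⟨fun k hk => by rw [leftTr_compl, h.1 k hk],
    fun g => by
      rw [Set.image_compl_eq (Group.mulRight_bijective g), compl_symmDiff_compl]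
      exact h.2 g⟩

theorem AlmostInv.conj (h : AlmostInv K A) (a : G) : AlmostInv (conjSub a K) (leftTr a A) := by
  refine ⟨fun k hk => ?_, fun g => ?_⟩
  · obtain ⟨k, hk', rfl⟩ := mem_conjSub.1 hk
    rw [leftTr_leftTr, show a * k * a⁻¹ * a = a * k by group, ← leftTr_leftTr, h.1 k hk']
  · have : (· * g) '' leftTr a A = leftTr a ((· * g) '' A) := by
      simp only [leftTr, Set.image_image, mul_assoc]
    rw [this, leftTr_eq_smul, leftTr_eq_smul, ← Set.smul_set_symmDiff, ← leftTr_eq_smul]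
    exact (h.2 g).conj a

theorem AlmostInv.hFinite_mul_notMem (h : AlmostInv L B) (t : G) :
    HFinite L {g ∈ B | g * t ∉ B} := by
  refine (h.2 t⁻¹).mono fun g ⟨hg, hgt⟩ => Or.inl ⟨hg, fun ⟨b, hb, hbg⟩ => hgt ?_⟩
  rwa [← hbg, inv_mul_cancel_right]

theorem NontrivialAI.compl (h : NontrivialAI K A) : NontrivialAI K Aᶜ :=
  ⟨h.1.compl, h.2.2, by rw [compl_compl]; exact h.2.1⟩

theorem NontrivialAI.conj (h : NontrivialAI K A) (a : G) :
    NontrivialAI (conjSub a K) (leftTr a A) :=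
  ⟨h.1.conj a, by rw [hFinite_leftTr_iff]; exact h.2.1,
    by rw [← leftTr_compl, hFinite_leftTr_iff]; exact h.2.2⟩

/-- Given `x ∈ A`, pick `g ∈ A ∩ B` outside a suitable `L`-finite set; then `g ∈ P`, say
`g = k f` with `k ∈ K`, and `k x = g (f⁻¹ x)` lies in `A ∩ B` but not in `Q`, so `x ∈ k⁻¹ P`.
Thus `A` is covered by the finitely many cosets `K f` that cover `P`. -/
theorem hFinite_inter_of_subset_union (hA : ∀ k ∈ K, leftTr k A = A) (hAK : ¬ HFinite K A)
    (hB : AlmostInv L B) (hPQ : A ∩ B ⊆ P ∪ Q) (hP : HFinite K P) (hQ : HFinite L Q) :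
    HFinite L (A ∩ B) := by
  by_contra hAB
  obtain ⟨F, hF⟩ := hFinite_iff.1 hP
  refine hAK (hFinite_iff.2 ⟨F, fun x hx => ?_⟩)
  set bad := Q ∪ ⋃ f ∈ F, ((· * (x⁻¹ * f)) '' Q ∪ {g ∈ B | g * (f⁻¹ * x) ∉ B})
  have hbad : HFinite L bad :=
    hQ.union (.biUnion F fun f _ => (hQ.image_mul_right _).union (hB.hFinite_mul_notMem _))
  obtain ⟨g, ⟨hgA, hgB⟩, hg⟩ := Set.not_subset.1 fun h => hAB (hbad.mono h)
  obtain ⟨k, hk, f, hf, rfl⟩ : ∃ k ∈ K, ∃ f ∈ F, k * f = g := by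
    exact hF g ((hPQ ⟨hgA, hgB⟩).resolve_right fun hgQ => hg (Or.inl hgQ))
  have hkxA : k * x ∈ A := by rw [← hA k hk]; exact ⟨x, hx, rfl⟩
  have hkxB : k * x ∈ B := by
    have : k * f * (f⁻¹ * x) ∈ B := by
      by_contra hout
      exact hg (Or.inr (Set.mem_biUnion hf (Or.inr ⟨hgB, hout⟩)))
    simpa [mul_assoc] using this
  rcases hPQ ⟨hkxA, hkxB⟩ with hkxP | hkxQ
  · obtain ⟨k', hk', f', hf', hkx⟩ := hF _ hkxP
    exact ⟨k⁻¹ * k', K.mul_mem (K.inv_mem hk) hk', f', hf', by rw [mul_assoc, hkx]; group⟩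
  · exact absurd (Or.inr (Set.mem_biUnion hf (Or.inl ⟨k * x, hkxQ, by group⟩))) hg

theorem NontrivialAI.hFinite_inter (hA : NontrivialAI K A) (hB : AlmostInv L B)
    (h : HFinite K (A ∩ B)) : HFinite L (A ∩ B) :=
  hFinite_inter_of_subset_union hA.1.1 hA.2.1 hB Set.subset_union_left h hFinite_empty

end AlmostInv

section Translates

variable {G : Type*} [Group G] {ι : Type*} {H : ι → Subgroup G} {X : ι → Set G}
  {U V W W' : Set G} {g : G} {i : ι}

def IsTranslate (X : ι → Set G) (g : G) (i : ι) (U : Set G) : Prop :=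
  U = leftTr g (X i) ∨ U = (leftTr g (X i))ᶜ

theorem IsTranslate.compl (h : IsTranslate X g i U) : IsTranslate X g i Uᶜ := by
  rcases h with rfl | rfl
  exacts [Or.inr rfl, Or.inl (compl_compl _)]

theorem IsTranslate.nontrivialAI (hnt : ∀ i, NontrivialAI (H i) (X i))
    (h : IsTranslate X g i U) : NontrivialAI (conjSub g (H i)) U := by
  rcases h with rfl | rfl
  exacts [(hnt i).conj g, ((hnt i).conj g).compl]

theorem IsTranslate.leftTr (h : IsTranslate X g i U) (a : G) :
    IsTranslate X (a * g) i (_root_.leftTr a U) := by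
  rcases h with rfl | rfl
  exacts [Or.inl (leftTr_leftTr _ _ _), Or.inr (by rw [leftTr_compl, leftTr_leftTr])]

theorem compl_mem_translates (hU : U ∈ Translates X) : Uᶜ ∈ Translates X :=
  let ⟨g, i, h⟩ := hU; ⟨g, i, IsTranslate.compl h⟩

theorem leftTr_mem_translates (hU : U ∈ Translates X) (a : G) : leftTr a U ∈ Translates X :=
  let ⟨g, i, h⟩ := hU; ⟨a * g, i, IsTranslate.leftTr h a⟩

theorem smallOver_compl : SmallOver H X Uᶜ W ↔ SmallOver H X U W := by
  refine ⟨fun ⟨g, i, h, hW⟩ => ⟨g, i, ?_, hW⟩,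
    fun ⟨g, i, h, hW⟩ => ⟨g, i, IsTranslate.compl h, hW⟩⟩
  have h' : IsTranslate X g i Uᶜᶜ := IsTranslate.compl h
  rwa [compl_compl] at h'

theorem SmallOver.mono (h : SmallOver H X U W) (hW : W' ⊆ W) : SmallOver H X U W' :=
  let ⟨g, i, hU, hfin⟩ := h; ⟨g, i, hU, hfin.mono hW⟩

theorem smallOver_empty (hU : U ∈ Translates X) : SmallOver H X U ∅ :=
  let ⟨g, i, h⟩ := hU; ⟨g, i, h, hFinite_empty⟩

theorem smallOver_leftTr (h : SmallOver H X U W) (a : G) :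
    SmallOver H X (leftTr a U) (leftTr a W) := by
  obtain ⟨g, i, hU, hW⟩ := h
  exact ⟨a * g, i, IsTranslate.leftTr hU a, by rw [← conjSub_conjSub]; exact hW.conj a⟩

theorem smallOver_leftTr_iff (a : G) :
    SmallOver H X (leftTr a U) (leftTr a W) ↔ SmallOver H X U W := by
  refine ⟨fun h => ?_, fun h => smallOver_leftTr h a⟩
  simpa only [leftTr_inv_leftTr] using smallOver_leftTr h a⁻¹

variable (hnt : ∀ i, NontrivialAI (H i) (X i))
include hnt

theorem not_smallOver_self : ¬ SmallOver H X U U :=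
  fun ⟨_, _, hU, hfin⟩ => (IsTranslate.nontrivialAI hnt hU).2.1 hfin

theorem SmallOver.hFinite_inter (h : SmallOver H X U (U ∩ V)) (hV : IsTranslate X g i V) :
    HFinite (conjSub g (H i)) (U ∩ V) :=
  let ⟨_, _, hU, hfin⟩ := h
  (IsTranslate.nontrivialAI hnt hU).hFinite_inter (hV.nontrivialAI hnt).1 hfin

theorem SmallOver.inter_comm (h : SmallOver H X U (U ∩ V)) (hV : V ∈ Translates X) :
    SmallOver H X V (V ∩ U) :=
  let ⟨g, i, hV⟩ := hV; ⟨g, i, hV, Set.inter_comm U V ▸ h.hFinite_inter hnt hV⟩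

theorem SmallOver.hFinite_inter_self (h : SmallOver H X U (U ∩ V)) (hU : IsTranslate X g i U)
    (hV : V ∈ Translates X) : HFinite (conjSub g (H i)) (U ∩ V) :=
  Set.inter_comm V U ▸ (h.inter_comm hnt hV).hFinite_inter hnt hU

theorem SmallOver.union (h : SmallOver H X U (U ∩ V)) (h' : SmallOver H X U (U ∩ W))
    (hV : V ∈ Translates X) (hW : W ∈ Translates X) : SmallOver H X U (U ∩ V ∪ U ∩ W) :=
  let ⟨g, i, hU, _⟩ := h
  ⟨g, i, hU, (h.hFinite_inter_self hnt hU hV).union (h'.hFinite_inter_self hnt hU hW)⟩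

end Translates

section Order

variable {G : Type*} [Group G] {ι : Type*} {H : ι → Subgroup G} {X : ι → Set G}
  {U V W A B : Set G}

theorem cond_mem_translates (hU : U ∈ Translates X) (b : Bool) :
    cond b U Uᶜ ∈ Translates X := by
  cases b
  exacts [compl_mem_translates hU, hU]

theorem smallOver_cond (b : Bool) : SmallOver H X (cond b U Uᶜ) W ↔ SmallOver H X U W := by
  cases b
  exacts [smallOver_compl, Iff.rfl]

theorem eLE.smallOver (h : eLE H X U V) (hU : U ∈ Translates X) :
    SmallOver H X U (U ∩ Vᶜ) :=
  h.elim (fun he => he ▸ smallOver_empty hU) And.left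

theorem eLE.inter_compl_eq_empty (h : eLE H X U V) (hs : SmallOver H X U (Uᶜ ∩ V)) :
    U ∩ Vᶜ = ∅ :=
  h.resolve_right fun h' => h'.2 (false, true) (by decide) hs

theorem eLE.not_crossesE (h : eLE H X A B) (hA : A = U ∨ A = Uᶜ) (hB : B = V ∨ B = Vᶜ)
    (hU : U ∈ Translates X) : ¬ CrossesE H X U V := by
  intro hc
  have hs : SmallOver H X U (A ∩ Bᶜ) := by
    rcases hA with rfl | rfl
    exacts [h.smallOver hU, smallOver_compl.1 (h.smallOver (compl_mem_translates hU))]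
  rcases hA with rfl | rfl <;> rcases hB with rfl | rfl
  exacts [hc (true, false) hs, hc (true, true) (by simpa [corner] using hs), hc (false, false) hs,
    hc (false, true) (by simpa [corner] using hs)]

variable (hnt : ∀ i, NontrivialAI (H i) (X i))
include hnt

theorem crossesE_comm (hU : U ∈ Translates X) (h : CrossesE H X U V) :
    CrossesE H X V U := fun p hs => by
  have hs' := ((smallOver_cond p.1).2 hs).inter_comm hnt (cond_mem_translates hU p.2)
  exact h p.swap ((smallOver_cond p.2).1 hs')

theorem eLE_iff (hU : U ∈ Translates X) (hV : V ∈ Translates X) :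
    eLE H X U V ↔ SmallOver H X U (U ∩ Vᶜ) ∧ (SmallOver H X U (Uᶜ ∩ V) → U ∩ Vᶜ = ∅) := by
  refine ⟨fun h => ⟨h.smallOver hU, h.inter_compl_eq_empty⟩, fun ⟨h₁, h₂⟩ => ?_⟩
  by_cases he : U ∩ Vᶜ = ∅
  · exact Or.inl he
  refine Or.inr ⟨h₁, ?_⟩
  rintro ⟨_ | _, _ | _⟩ hp hs
  · -- the corner `U* ∩ V*` is small, and with `U ∩ V*` it makes up `V*`
    have h₃ := (smallOver_compl.2 hs).inter_comm hnt (compl_mem_translates hV)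
    have h₄ := h₁.inter_comm hnt (compl_mem_translates hV)
    have := h₄.union hnt h₃ hU (compl_mem_translates hU)
    exact not_smallOver_self hnt (by rwa [Set.inter_union_compl] at this)
  · exact he (h₂ hs)
  · exact absurd rfl hp
  · have hs : SmallOver H X U (U ∩ V) := hs
    have := hs.union hnt h₁ hV (compl_mem_translates hV)
    exact not_smallOver_self hnt (by rwa [Set.inter_union_compl] at this)

theorem eLE.compl (h : eLE H X U V) (hU : U ∈ Translates X) (hV : V ∈ Translates X) :
    eLE H X Vᶜ Uᶜ := by
  rw [eLE_iff hnt hU hV] at h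
  rw [eLE_iff hnt (compl_mem_translates hV) (compl_mem_translates hU), compl_compl, compl_compl]
  refine ⟨h.1.inter_comm hnt (compl_mem_translates hV), fun hs => ?_⟩
  rw [Set.inter_comm, h.2]
  exact smallOver_compl.1 ((smallOver_compl.1 hs).inter_comm hnt (compl_mem_translates hU))

theorem eLE_antisymm (h : eLE H X U V) (h' : eLE H X V U) (hU : U ∈ Translates X)
    (hV : V ∈ Translates X) : U = V := by
  have hUV := h.inter_compl_eq_empty
    (smallOver_compl.1 ((h'.smallOver hV).inter_comm hnt (compl_mem_translates hU)))
  have hVU := h'.inter_compl_eq_empty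
    (smallOver_compl.1 ((h.smallOver hU).inter_comm hnt (compl_mem_translates hV)))
  exact (Set.inter_compl_eq_empty_iff.1 hUV).antisymm (Set.inter_compl_eq_empty_iff.1 hVU)

theorem not_eLE_compl_self (hU : U ∈ Translates X) : ¬ eLE H X U Uᶜ := fun h =>
  not_smallOver_self hnt (by simpa using h.smallOver hU)

/-- `U ∩ W*` lies in `(U ∩ V*) ∪ (V ∩ W*)`, a union of a set finite over the group of `U` and
one finite over the group of `W`; `hFinite_inter_of_subset_union` makes it small. -/
theorem smallOver_inter_compl_of_eLE_of_eLE (h : eLE H X U V) (h' : eLE H X V W)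
    (hU : U ∈ Translates X) (hV : V ∈ Translates X) (hW : W ∈ Translates X) :
    SmallOver H X U (U ∩ Wᶜ) := by
  obtain ⟨g, i, hUg⟩ := hU
  obtain ⟨g', i', hWg⟩ := compl_mem_translates hW
  have hsplit : U ∩ Wᶜ ⊆ U ∩ Vᶜ ∪ V ∩ Wᶜ := fun x ⟨hxU, hxW⟩ =>
    (em (x ∈ V)).elim (fun hxV => Or.inr ⟨hxV, hxW⟩) (fun hxV => Or.inl ⟨hxU, hxV⟩)
  have hfin := hFinite_inter_of_subset_union (IsTranslate.nontrivialAI hnt hUg).1.1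
    (IsTranslate.nontrivialAI hnt hUg).2.1 (IsTranslate.nontrivialAI hnt hWg).1 hsplit
    ((h.smallOver ⟨g, i, hUg⟩).hFinite_inter_self hnt hUg (compl_mem_translates hV))
    ((h'.smallOver hV).hFinite_inter hnt hWg)
  have hs : SmallOver H X Wᶜ (Wᶜ ∩ U) := ⟨g', i', hWg, Set.inter_comm U Wᶜ ▸ hfin⟩
  exact hs.inter_comm hnt ⟨g, i, hUg⟩

theorem eLE_trans (hgood : GoodPosition H X) (h : eLE H X U V) (h' : eLE H X V W)
    (hU : U ∈ Translates X) (hV : V ∈ Translates X) (hW : W ∈ Translates X) : eLE H X U W := by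
  have hs := smallOver_inter_compl_of_eLE_of_eLE hnt h h' hU hV hW
  refine (eLE_iff hnt hU hW).2 ⟨hs, fun hs' => ?_⟩
  obtain ⟨⟨_ | _, _ | _⟩, hr⟩ := hgood U hU W hW (true, false) (false, true) (by decide) hs hs'
  · have hWU : Wᶜ ∩ U = Wᶜ := Set.inter_eq_left.2 fun x hx => by_contra fun hxU =>
      (Set.eq_empty_iff_forall_notMem.1 hr) x ⟨hxU, hx⟩
    exact absurd (hWU ▸ hs.inter_comm hnt (compl_mem_translates hW)) (not_smallOver_self hnt)
  · -- `W ⊆ U`: then `U* ∩ V` and `V* ∩ W` are small, which forces `U ⊆ V ⊆ W`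
    have hWU : W ⊆ U := Set.inter_compl_eq_empty_iff.1 (Set.inter_comm W Uᶜ ▸ hr)
    have hUV : U ⊆ V := Set.inter_compl_eq_empty_iff.1 <| h.inter_compl_eq_empty <|
      smallOver_compl.1 <| ((h'.smallOver hV).mono (Set.inter_subset_inter_right V
        (Set.compl_subset_compl.2 hWU))).inter_comm hnt (compl_mem_translates hU)
    have hVW : V ⊆ W := Set.inter_compl_eq_empty_iff.1 <| h'.inter_compl_eq_empty <| by
      rw [Set.inter_comm, Set.inter_compl_eq_empty_iff.2 (hWU.trans hUV)]
      exact smallOver_empty hV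
    exact Set.inter_compl_eq_empty_iff.2 (hUV.trans hVW)
  · exact hr
  · have hUW : U ∩ Wᶜ = U := Set.inter_eq_left.2 fun x hx hxW =>
      (Set.eq_empty_iff_forall_notMem.1 hr) x ⟨hx, hxW⟩
    exact absurd (hUW ▸ hs) (not_smallOver_self hnt)

theorem exists_eLE_of_not_crossesE (hgood : GoodPosition H X) (hU : U ∈ Translates X)
    (hV : V ∈ Translates X) (h : ¬ CrossesE H X U V) :
    ∃ A B, (A = U ∨ A = Uᶜ) ∧ (B = V ∨ B = Vᶜ) ∧ eLE H X A B := by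
  have hcond : ∀ (b : Bool) (U : Set G), cond b U Uᶜ = U ∨ cond b U Uᶜ = Uᶜ := by
    rintro (_ | _) U <;> simp
  obtain ⟨p, hp⟩ : ∃ p, SmallOver H X U (corner U V p) := not_forall_not.1 h
  by_cases hq : ∃ q ≠ p, SmallOver H X U (corner U V q)
  · obtain ⟨q, hqp, hq⟩ := hq
    obtain ⟨r, hr⟩ := hgood U hU V hV p q hqp.symm hp hq
    exact ⟨_, _, hcond r.1 U, compl_eq_or_compl_eq_compl (hcond r.2 V),
      Or.inl (by rwa [compl_compl])⟩
  push Not at hq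
  refine ⟨_, _, hcond p.1 U, compl_eq_or_compl_eq_compl (hcond p.2 V),
    (eLE_iff hnt (cond_mem_translates hU p.1)
      (compl_mem_translates (cond_mem_translates hV p.2))).2 ⟨?_, fun hs => ?_⟩⟩
  · rw [compl_compl, smallOver_cond]
    exact hp
  · refine (hq (!p.1, !p.2) (by cases p; simp) ?_).elim
    rcases p with ⟨_ | _, _ | _⟩ <;> simpa [corner, smallOver_compl] using hs

end Order

section Components

variable {G : Type*} [Group G] {ι : Type*} {H : ι → Subgroup G} {X : ι → Set G}
  {U V A a b v x y : Set G}

theorem mem_translates_of_orient (hU : U ∈ Translates X) (hA : A = U ∨ A = Uᶜ) :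
    A ∈ Translates X := by
  rcases hA with rfl | rfl
  exacts [hU, compl_mem_translates hU]

theorem SameCCC.symm (h : SameCCC H X U V) : SameCCC H X V U := Relation.EqvGen.symm _ _ h

theorem SameCCC.trans (h : SameCCC H X U V) (h' : SameCCC H X V A) : SameCCC H X U A :=
  Relation.EqvGen.trans _ _ _ h h'

theorem sameCCC_of_crossesE (hU : U ∈ Translates X) (hV : V ∈ Translates X)
    (h : CrossesE H X U V) : SameCCC H X U V :=
  Relation.EqvGen.rel _ _ ⟨hU, hV, Or.inr (Or.inr h)⟩

theorem sameCCC_of_orient (hU : U ∈ Translates X) (hA : A = U ∨ A = Uᶜ) : SameCCC H X A U := by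
  rcases hA with rfl | rfl
  exacts [Relation.EqvGen.refl _,
    Relation.EqvGen.rel _ _ ⟨compl_mem_translates hU, hU, Or.inr (Or.inl rfl)⟩]

def LiesAbove (H : ι → Subgroup G) (X : ι → Set G) (v t : Set G) : Prop :=
  ∃ t', (t' = t ∨ t' = tᶜ) ∧ eLE H X v t'

theorem liesAbove_compl_iff : LiesAbove H X v aᶜ ↔ LiesAbove H X v a := by
  simp only [LiesAbove, compl_compl, or_comm]

variable (hnt : ∀ i, NontrivialAI (H i) (X i)) (hgood : GoodPosition H X)
include hnt hgood

theorem liesAbove_or_liesAbove_compl (hv : v ∈ Translates X) (ha : a ∈ Translates X)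
    (h : ¬ CrossesE H X v a) : LiesAbove H X v a ∨ LiesAbove H X vᶜ a := by
  obtain ⟨v', a', rfl | rfl, ha', hle⟩ := exists_eLE_of_not_crossesE hnt hgood hv ha h
  exacts [Or.inl ⟨a', ha', hle⟩, Or.inr ⟨a', ha', hle⟩]

/-- If `v ≤ a'` and `b` were on the other side, `b'* ≤ v ≤ a'` would prevent `a` and `b`
from crossing. -/
theorem LiesAbove.of_crossesE (h : LiesAbove H X v a) (hab : CrossesE H X a b)
    (hvb : ¬ CrossesE H X v b) (hv : v ∈ Translates X) (ha : a ∈ Translates X)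
    (hb : b ∈ Translates X) : LiesAbove H X v b := by
  refine (liesAbove_or_liesAbove_compl hnt hgood hv hb hvb).resolve_right ?_
  rintro ⟨b', hb', hvb'⟩
  obtain ⟨a', ha', hva'⟩ := h
  have hb'T := mem_translates_of_orient hb hb'
  have hb'v : eLE H X b'ᶜ v := by simpa using hvb'.compl hnt (compl_mem_translates hv) hb'T
  have hb'a' := eLE_trans hnt hgood hb'v hva' (compl_mem_translates hb'T) hv
    (mem_translates_of_orient ha ha')
  exact hb'a'.not_crossesE (compl_eq_or_compl_eq_compl hb') ha' hb (crossesE_comm hnt ha hab)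

theorem liesAbove_iff_of_ccRelSet (hv : v ∈ Translates X) (hab : ccRelSet H X a b)
    (hva : ¬ SameCCC H X v a) : LiesAbove H X v a ↔ LiesAbove H X v b := by
  obtain ⟨ha, hb, rfl | rfl | hab⟩ := hab
  · rfl
  · exact liesAbove_compl_iff
  have hvb : ¬ SameCCC H X v b := fun h => hva (h.trans (sameCCC_of_crossesE ha hb hab).symm)
  exact ⟨fun h => h.of_crossesE hnt hgood hab
      (fun hc => hvb (sameCCC_of_crossesE hv hb hc)) hv ha hb,
    fun h => h.of_crossesE hnt hgood (crossesE_comm hnt ha hab)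
      (fun hc => hva (sameCCC_of_crossesE hv ha hc)) hv hb ha⟩

theorem liesAbove_iff_of_sameCCC (hv : v ∈ Translates X) (hab : SameCCC H X a b)
    (hva : ¬ SameCCC H X v a) : LiesAbove H X v a ↔ LiesAbove H X v b := by
  revert hva
  induction hab with
  | rel a b hab => exact liesAbove_iff_of_ccRelSet hnt hgood hv hab
  | refl => exact fun _ => Iff.rfl
  | symm a b hab ih => exact fun hvb => (ih fun hva => hvb (hva.trans hab)).symm
  | trans a b c hab _ ih₁ ih₂ =>
    exact fun hva => (ih₁ hva).trans (ih₂ fun hvb => hva (hvb.trans hab.symm))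

theorem eLE_compl_of_liesAbove_of_liesAbove (hvy : LiesAbove H X v y) (hyv : LiesAbove H X y v)
    (hne : v ≠ y) (hv : v ∈ Translates X) (hy : y ∈ Translates X) : eLE H X v yᶜ := by
  obtain ⟨y', rfl | rfl, h⟩ := hvy
  · obtain ⟨v', rfl | rfl, h'⟩ := hyv
    · exact absurd (eLE_antisymm hnt h h' hv hy) hne
    · exact absurd (eLE_trans hnt hgood h h' hv hy (compl_mem_translates hv))
        (not_eLE_compl_self hnt hv)
  · exact h

theorem eq_of_eLE_of_liesAbove_compl (hvy : eLE H X v yᶜ) (hxv : LiesAbove H X vᶜ x)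
    (hxy : eLE H X x y) (hv : v ∈ Translates X) (hx : x ∈ Translates X)
    (hy : y ∈ Translates X) : x = y := by
  have hyv : eLE H X y vᶜ := by simpa using hvy.compl hnt hv (compl_mem_translates hy)
  obtain ⟨x', rfl | rfl, h⟩ := hxv
  · exact eLE_antisymm hnt hxy (eLE_trans hnt hgood hyv h hy (compl_mem_translates hv) hx) hx hy
  · have hxv : eLE H X x v := by
      simpa using h.compl hnt (compl_mem_translates hv) (compl_mem_translates hx)
    have hxyc := eLE_trans hnt hgood hxv hvy hx hv (compl_mem_translates hy)
    exact absurd (eLE_trans hnt hgood hxyc (hxy.compl hnt hx hy) hx (compl_mem_translates hy)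
      (compl_mem_translates hx)) (not_eLE_compl_self hnt hx)

end Components

section Pretree

variable {G : Type*} [Group G] {ι : Type*} {H : ι → Subgroup G} {X : ι → Set G}
  {A B C D : Quotient (cccSetoid H X)}

theorem mk_eq_mk_iff {u v : {U : Set G // U ∈ Translates X}} :
    Quotient.mk (cccSetoid H X) u = Quotient.mk (cccSetoid H X) v ↔ SameCCC H X u.1 v.1 :=
  Quotient.eq

def orientE (u : {U : Set G // U ∈ Translates X}) {A : Set G} (hA : A = u.1 ∨ A = u.1ᶜ) :
    {U : Set G // U ∈ Translates X} :=
  ⟨A, mem_translates_of_orient u.2 hA⟩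

theorem mk_orientE (u : {U : Set G // U ∈ Translates X}) {A : Set G} (hA : A = u.1 ∨ A = u.1ᶜ) :
    Quotient.mk (cccSetoid H X) (orientE u hA) = Quotient.mk (cccSetoid H X) u :=
  mk_eq_mk_iff.2 (sameCCC_of_orient u.2 hA)

variable (hnt : ∀ i, NontrivialAI (H i) (X i))
include hnt

theorem eLT.compl {U V : Set G} (h : eLT H X U V) (hU : U ∈ Translates X)
    (hV : V ∈ Translates X) : eLT H X Vᶜ Uᶜ :=
  ⟨h.1.compl hnt hU hV, fun he => h.2 (compl_inj_iff.1 he).symm⟩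

theorem BetweenCCC.symm (h : BetweenCCC H X A B C) : BetweenCCC H X C B A := by
  obtain ⟨hAB, hBC, hAC, u, v, w, rfl, rfl, rfl, huv, hvw⟩ := h
  exact ⟨hBC.symm, hAB.symm, hAC.symm, orientE w (Or.inr rfl), orientE v (Or.inr rfl),
    orientE u (Or.inr rfl), mk_orientE _ _, mk_orientE _ _, mk_orientE _ _,
    hvw.compl hnt v.2 w.2, huv.compl hnt u.2 v.2⟩

variable (hgood : GoodPosition H X)
include hgood

theorem BetweenCCC.not_swap (h : BetweenCCC H X A B C) : ¬ BetweenCCC H X A C B := by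
  obtain ⟨hAB, hBC, -, u, v, w, rfl, rfl, rfl, huv, hvw⟩ := h
  rintro ⟨-, -, -, x, y, z, hx, hy, hz, hxy, hyz⟩
  have hvw' : ¬ SameCCC H X v.1 w.1 := fun h => hBC (mk_eq_mk_iff.2 h)
  have hyz' : ¬ SameCCC H X y.1 z.1 := fun h => hBC (by rw [← hy, ← hz, mk_eq_mk_iff.2 h])
  have hvu' : ¬ SameCCC H X v.1ᶜ u.1 := fun h =>
    hAB (mk_eq_mk_iff.2 ((sameCCC_of_orient v.2 (Or.inr rfl)).symm.trans h).symm)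
  have hvy : LiesAbove H X v.1 y.1 :=
    (liesAbove_iff_of_sameCCC hnt hgood v.2 (mk_eq_mk_iff.1 hy).symm hvw').1
      ⟨w.1, Or.inl rfl, hvw.1⟩
  have hyv : LiesAbove H X y.1 v.1 :=
    (liesAbove_iff_of_sameCCC hnt hgood y.2 (mk_eq_mk_iff.1 hz) hyz').1 ⟨z.1, Or.inl rfl, hyz.1⟩
  have hxv : LiesAbove H X v.1ᶜ x.1 :=
    (liesAbove_iff_of_sameCCC hnt hgood (compl_mem_translates v.2) (mk_eq_mk_iff.1 hx).symm hvu').1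
      ⟨u.1ᶜ, Or.inr rfl, huv.1.compl hnt u.2 v.2⟩
  have hvy' := eLE_compl_of_liesAbove_of_liesAbove hnt hgood hvy hyv
    (fun h => hBC (by rw [← hy, Subtype.ext h])) v.2 y.2
  exact hxy.2 (eq_of_eLE_of_liesAbove_compl hnt hgood hvy' hxv hxy.1 v.2 x.2 y.2)

theorem BetweenCCC.or_of_ne (h : BetweenCCC H X A B C) (hDB : D ≠ B) :
    BetweenCCC H X A B D ∨ BetweenCCC H X D B C := by
  by_cases hDA : D = A
  · exact Or.inr (hDA ▸ h)
  by_cases hDC : D = C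
  · exact Or.inl (hDC ▸ h)
  obtain ⟨hAB, hBC, -, u, v, w, rfl, rfl, rfl, huv, hvw⟩ := h
  obtain ⟨d, rfl⟩ := Quotient.exists_rep D
  have hvd : ¬ SameCCC H X v.1 d.1 := fun h => hDB (mk_eq_mk_iff.2 h).symm
  have hne : ∀ {d'}, (d' = d.1 ∨ d' = d.1ᶜ) → v.1 ≠ d' := fun hd' he =>
    hvd (he ▸ sameCCC_of_orient d.2 hd')
  rcases liesAbove_or_liesAbove_compl hnt hgood v.2 d.2
    (fun hc => hvd (sameCCC_of_crossesE v.2 d.2 hc)) with ⟨d', hd', hvd'⟩ | ⟨d', hd', hvd'⟩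
  · exact Or.inl ⟨hAB, Ne.symm hDB, Ne.symm hDA, u, v, orientE d hd', rfl, rfl, mk_orientE d hd',
      huv, hvd', hne hd'⟩
  · have hd'v : eLE H X d'ᶜ v.1 := by
      simpa using hvd'.compl hnt (compl_mem_translates v.2) (mem_translates_of_orient d.2 hd')
    exact Or.inr ⟨hDB, hBC, hDC, orientE d (compl_eq_or_compl_eq_compl hd'), v, w,
      mk_orientE _ _, rfl, rfl,
      ⟨hd'v, fun he => hne (compl_eq_or_compl_eq_compl hd') he.symm⟩, hvw⟩

end Pretree

section Translation

variable {G : Type*} [Group G] {ι : Type*} {H : ι → Subgroup G} {X : ι → Set G} {U V : Set G}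

theorem corner_leftTr (a : G) (U V : Set G) (p : Bool × Bool) :
    corner (leftTr a U) (leftTr a V) p = leftTr a (corner U V p) := by
  rcases p with ⟨_ | _, _ | _⟩ <;>
    simp [corner, leftTr_eq_smul, Set.smul_set_inter, Set.smul_set_compl]

theorem eLE_leftTr (h : eLE H X U V) (a : G) : eLE H X (leftTr a U) (leftTr a V) := by
  have hc := corner_leftTr a U V
  rcases h with h | ⟨h₁, h₂⟩
  · refine Or.inl ((hc (true, false)).trans ?_)
    rw [show corner U V (true, false) = ∅ from h, leftTr_eq_smul, Set.smul_set_empty]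
  · refine Or.inr ⟨?_, fun p hp hs => h₂ p hp ((smallOver_leftTr_iff a).1 (hc p ▸ hs))⟩
    have h₁ : SmallOver H X (leftTr a U) (leftTr a (corner U V (true, false))) :=
      smallOver_leftTr h₁ a
    rwa [← hc (true, false)] at h₁

theorem eLT_leftTr (h : eLT H X U V) (a : G) : eLT H X (leftTr a U) (leftTr a V) :=
  ⟨eLE_leftTr h.1 a,
    fun he => h.2 (by simpa only [leftTr_inv_leftTr] using congrArg (leftTr a⁻¹) he)⟩

theorem crossesE_leftTr (h : CrossesE H X U V) (a : G) :
    CrossesE H X (leftTr a U) (leftTr a V) := fun p hs =>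
  h p ((smallOver_leftTr_iff a).1 (corner_leftTr a U V p ▸ hs))

theorem sameCCC_leftTr (h : SameCCC H X U V) (a : G) :
    SameCCC H X (leftTr a U) (leftTr a V) := by
  induction h with
  | rel U V h =>
    obtain ⟨hU, hV, h⟩ := h
    refine Relation.EqvGen.rel _ _ ⟨leftTr_mem_translates hU a, leftTr_mem_translates hV a, ?_⟩
    rcases h with rfl | rfl | h
    exacts [Or.inl rfl, Or.inr (Or.inl (leftTr_compl a V)), Or.inr (Or.inr (crossesE_leftTr h a))]
  | refl => exact Relation.EqvGen.refl _
  | symm _ _ _ ih => exact ih.symm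
  | trans _ _ _ _ _ ih₁ ih₂ => exact ih₁.trans ih₂

theorem mk_translateE_eq_iff (g : G) (u v : {U : Set G // U ∈ Translates X}) :
    Quotient.mk (cccSetoid H X) (translateE X g u) =
        Quotient.mk (cccSetoid H X) (translateE X g v) ↔
      Quotient.mk (cccSetoid H X) u = Quotient.mk (cccSetoid H X) v := by
  rw [mk_eq_mk_iff, mk_eq_mk_iff]
  refine ⟨fun h => ?_, fun h => sameCCC_leftTr h g⟩
  simpa only [translateE, leftTr_inv_leftTr] using sameCCC_leftTr h g⁻¹

theorem BetweenCCC.translate {u v w : {U : Set G // U ∈ Translates X}}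
    (h : BetweenCCC H X (Quotient.mk _ u) (Quotient.mk _ v) (Quotient.mk _ w)) (g : G) :
    BetweenCCC H X (Quotient.mk _ (translateE X g u)) (Quotient.mk _ (translateE X g v))
      (Quotient.mk _ (translateE X g w)) := by
  obtain ⟨huv, hvw, huw, u', v', w', hu, hv, hw, h₁, h₂⟩ := h
  exact ⟨mt (mk_translateE_eq_iff g u v).1 huv, mt (mk_translateE_eq_iff g v w).1 hvw,
    mt (mk_translateE_eq_iff g u w).1 huw, translateE X g u', translateE X g v', translateE X g w',
    (mk_translateE_eq_iff g u' u).2 hu, (mk_translateE_eq_iff g v' v).2 hv,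
    (mk_translateE_eq_iff g w' w).2 hw, eLT_leftTr h₁ g, eLT_leftTr h₂ g⟩

end Translation

theorem stmt8_general {G : Type*} [Group G] {n : ℕ}
    (H : Fin n → Subgroup G) (X : Fin n → Set G)
    (hnt : ∀ i, NontrivialAI (H i) (X i))
    (hgood : GoodPosition H X) :
    -- (T0)
    (∀ A B C : Quotient (cccSetoid H X), BetweenCCC H X A B C → A ≠ C) ∧
    -- (T1)
    (∀ A B C : Quotient (cccSetoid H X), BetweenCCC H X A B C → BetweenCCC H X C B A) ∧
    -- (T2)
    (∀ A B C : Quotient (cccSetoid H X), BetweenCCC H X A B C → ¬ BetweenCCC H X A C B) ∧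
    -- (T3)
    (∀ A B C D : Quotient (cccSetoid H X), BetweenCCC H X A B C → D ≠ B →
      BetweenCCC H X A B D ∨ BetweenCCC H X D B C) ∧
    -- left translation descends to an action on `P` ...
    (∀ (g : G) (U V : Set G), SameCCC H X U V → SameCCC H X (leftTr g U) (leftTr g V)) ∧
    -- ... which preserves betweenness
    (∀ (g : G) (u v w : {U : Set G // U ∈ Translates X}),
      BetweenCCC H X (Quotient.mk (cccSetoid H X) u) (Quotient.mk (cccSetoid H X) v)
        (Quotient.mk (cccSetoid H X) w) →
      BetweenCCC H X (Quotient.mk (cccSetoid H X) (translateE X g u))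
        (Quotient.mk (cccSetoid H X) (translateE X g v))
        (Quotient.mk (cccSetoid H X) (translateE X g w))) :=
  ⟨fun _ _ _ h => h.2.2.1, fun _ _ _ h => h.symm hnt, fun _ _ _ h => h.not_swap hnt hgood,
    fun _ _ _ _ h hDB => h.or_of_ne hnt hgood hDB, fun g _ _ h => sameCCC_leftTr h g,
    fun g _ _ _ h => h.translate g⟩

/-- The set `P` of cross-connected components of `Ē`, with the betweenness
relation, is a pretree satisfying axioms (T0)-(T3), and left translation induces an action
of `G` on `P` which preserves betweenness. -/
theorem stmt8 {G : Type*} [Group G] (hGfg : Group.FG G) {n : ℕ}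
    (H : Fin n → Subgroup G) (X : Fin n → Set G)
    (hHfg : ∀ i, (H i).FG) (hnt : ∀ i, NontrivialAI (H i) (X i))
    (hgood : GoodPosition H X) :
    -- (T0)
    (∀ A B C : Quotient (cccSetoid H X), BetweenCCC H X A B C → A ≠ C) ∧
    -- (T1)
    (∀ A B C : Quotient (cccSetoid H X), BetweenCCC H X A B C → BetweenCCC H X C B A) ∧
    -- (T2)
    (∀ A B C : Quotient (cccSetoid H X), BetweenCCC H X A B C → ¬ BetweenCCC H X A C B) ∧
    -- (T3)
    (∀ A B C D : Quotient (cccSetoid H X), BetweenCCC H X A B C → D ≠ B →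
      BetweenCCC H X A B D ∨ BetweenCCC H X D B C) ∧
    -- left translation descends to an action on `P` ...
    (∀ (g : G) (U V : Set G), SameCCC H X U V → SameCCC H X (leftTr g U) (leftTr g V)) ∧
    -- ... which preserves betweenness
    (∀ (g : G) (u v w : {U : Set G // U ∈ Translates X}),
      BetweenCCC H X (Quotient.mk (cccSetoid H X) u) (Quotient.mk (cccSetoid H X) v)
        (Quotient.mk (cccSetoid H X) w) →
      BetweenCCC H X (Quotient.mk (cccSetoid H X) (translateE X g u))
        (Quotient.mk (cccSetoid H X) (translateE X g v))
        (Quotient.mk (cccSetoid H X) (translateE X g w))) :=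
  stmt8_general H X hnt hgood
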